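/- Let m ∈ ℝ∖{0} and ν ∈ ℝ∖ℤ. Then W_ν is continuously real-differentiable on the slit plane ℂ∖(−∞,0] and satisfies ∂W_ν(z) = |m|·W_{ν−1}(z) and ∂̄W_ν(z) = |m|·W_{ν+1}(z) for all z ∈ ℂ∖(−∞,0]. -/

import Mathlib

open Complex Topology

/-- The modified Bessel function of the first kind
`I_ν(x) = Σ_{k=0}^∞ (x/2)^{2k+ν}/(k!·Γ(k+ν+1))` (for `x > 0`). -/
noncomputable def besselI (ν x : ℝ) : ℝ :=
  ∑' k : ℕ, (x / 2) ^ (2 * (k : ℝ) + ν) / ((k.factorial : ℝ) * Real.Gamma ((k : ℝ) + ν + 1))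

/-- `W_ν(z) = e^{iνθ}·I_ν(2|m|r)` for `z = r·e^{iθ}` on the slit plane,
`θ = Arg z ∈ (−π,π)`. -/
noncomputable def Wfun (m ν : ℝ) (z : ℂ) : ℂ :=
  Complex.exp (Complex.I * (ν : ℂ) * (Complex.arg z : ℂ)) *
    (besselI ν (2 * |m| * ‖z‖) : ℂ)

namespace Stmt2Aux
open Filter

noncomputable def co (m ν : ℝ) (k : ℕ) : ℝ :=
  |m| ^ (2 * (k:ℝ) + ν) / ((k.factorial : ℝ) * Real.Gamma ((k:ℝ) + ν + 1))

noncomputable def g (m ν : ℝ) (u : ℂ) : ℂ := ∑' k : ℕ, (co m ν k : ℂ) * u ^ k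



lemma nonint {ν : ℝ} (hν : ∀ k : ℤ, ν ≠ (k : ℝ)) (j : ℝ) (hj : ∃ i : ℤ, (i:ℝ) = j)
    (b : ℤ) : j + ν ≠ (b:ℝ) := by
  obtain ⟨i, rfl⟩ := hj
  intro h
  exact hν (b - i) (by push_cast; linarith)

lemma gamma_ne {ν : ℝ} (hν : ∀ k : ℤ, ν ≠ (k : ℝ)) (j : ℝ) (hj : ∃ i : ℤ, (i:ℝ) = j) :
    Real.Gamma (j + ν) ≠ 0 := by
  refine Real.Gamma_ne_zero fun n => ?_
  have := nonint hν j hj (-(n:ℤ))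
  push_cast at this
  exact this

lemma co_ne {m ν : ℝ} (hm : m ≠ 0) (hν : ∀ k : ℤ, ν ≠ (k : ℝ)) (k : ℕ) : co m ν k ≠ 0 := by
  apply div_ne_zero
  · exact (Real.rpow_pos_of_pos (abs_pos.2 hm) _).ne'
  · refine mul_ne_zero (Nat.cast_ne_zero.2 k.factorial_ne_zero) ?_
    have h : (k:ℝ) + ν + 1 = ((k:ℝ)+1) + ν := by ring
    rw [h]
    exact gamma_ne hν _ ⟨(k:ℤ)+1, by push_cast; ring⟩

lemma co_rec {m ν : ℝ} (hm : m ≠ 0) (hν : ∀ k : ℤ, ν ≠ (k : ℝ)) (k : ℕ) :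
    co m ν (k+1) = co m ν k * (|m|^(2:ℝ) / (((k:ℝ)+1) * ((k:ℝ)+ν+1))) := by
  have hΓne : Real.Gamma ((k:ℝ) + ν + 1) ≠ 0 := by
    have h : (k:ℝ) + ν + 1 = ((k:ℝ)+1) + ν := by ring
    rw [h]; exact gamma_ne hν _ ⟨(k:ℤ)+1, by push_cast; ring⟩
  have hne : (k:ℝ) + ν + 1 ≠ 0 := by
    have := nonint hν ((k:ℝ)+1) ⟨(k:ℤ)+1, by push_cast; ring⟩ 0
    push_cast at this ⊢; intro h; exact this (by linarith)
  have hΓ : Real.Gamma (((k:ℝ)+1) + ν + 1) = ((k:ℝ)+ν+1) * Real.Gamma ((k:ℝ)+ν+1) := by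
    have h : ((k:ℝ)+1) + ν + 1 = ((k:ℝ)+ν+1) + 1 := by push_cast; ring
    rw [h, Real.Gamma_add_one hne]
  have hpow : |m| ^ (2 * ((k:ℝ)+1) + ν) = |m| ^ (2*(k:ℝ)+ν) * |m|^(2:ℝ) := by
    rw [← Real.rpow_add (abs_pos.2 hm)]; ring_nf
  unfold co
  push_cast
  rw [hpow, hΓ, Nat.factorial_succ]
  push_cast
  field_simp



lemma summable_main {m ν : ℝ} (hm : m ≠ 0) (hν : ∀ k : ℤ, ν ≠ (k : ℝ)) {S : ℝ} (hS : 0 < S) :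
    Summable (fun k : ℕ => ((k:ℝ)+1) * |co m ν k| * S^k) := by
  set C := S * |m|^(2:ℝ) with hC
  have hC0 : 0 < C := mul_pos hS (Real.rpow_pos_of_pos (abs_pos.2 hm) _)
  apply summable_of_ratio_norm_eventually_le (show (1:ℝ)/2 < 1 by norm_num)
  filter_upwards [eventually_ge_atTop ⌈|ν| + 4*C + 4⌉₊] with k hk
  have hk' : |ν| + 4*C + 4 ≤ (k:ℝ) := le_trans (Nat.le_ceil _) (Nat.cast_le.2 hk)
  have h1 : (1:ℝ) ≤ (k:ℝ) + ν + 1 := by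
    have := abs_le.1 (le_refl |ν|) |>.1
    nlinarith [abs_nonneg ν]
  have hrec := co_rec hm hν k
  have habs : |co m ν (k+1)| = |co m ν k| * (|m|^(2:ℝ) / (((k:ℝ)+1) * ((k:ℝ)+ν+1))) := by
    rw [hrec, abs_mul]
    congr 1
    rw [abs_of_pos]
    positivity
  rw [Real.norm_eq_abs, Real.norm_eq_abs]
  have hpos : (0:ℝ) ≤ |co m ν k| := abs_nonneg _
  have hSk : (0:ℝ) < S^k := pow_pos hS k
  have e1 : |(((k+1:ℕ):ℝ) + 1) * |co m ν (k+1)| * S ^ (k+1)| =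
      (((k+1:ℕ):ℝ)+1) * |co m ν (k+1)| * S^(k+1) := _root_.abs_of_nonneg (by positivity)
  have e2 : |((k:ℝ) + 1) * |co m ν k| * S ^ k| =
      ((k:ℝ)+1) * |co m ν k| * S^k := _root_.abs_of_nonneg (by positivity)
  rw [e1, e2]
  push_cast
  rw [habs, pow_succ]
  -- goal: (k+1+1) * (|co| * (|m|^2/((k+1)(k+ν+1)))) * (S^k * S) ≤ 1/2 * ((k+1)*|co|*S^k)
  have hD : (0:ℝ) < ((k:ℝ)+1) * ((k:ℝ)+ν+1) := mul_pos (by positivity) (by linarith)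
  have hk0 : (0:ℝ) ≤ (k:ℝ) := Nat.cast_nonneg k
  have hν' : -|ν| ≤ ν := neg_abs_le ν
  have h2 : 4*C + 5 ≤ (k:ℝ) + ν + 1 := by linarith
  have key : ((k:ℝ)+1+1) * (|m|^(2:ℝ)/(((k:ℝ)+1) * ((k:ℝ)+ν+1))) * S ≤ 1/2 * ((k:ℝ)+1) := by
    have e : ((k:ℝ)+1+1) * (|m|^(2:ℝ)/(((k:ℝ)+1)*((k:ℝ)+ν+1))) * S
        = (C*((k:ℝ)+2))/(((k:ℝ)+1)*((k:ℝ)+ν+1)) := by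
      rw [hC]; field_simp; ring
    rw [e, div_le_iff₀ hD]
    nlinarith [h2, hC0, hk0, sq_nonneg ((k:ℝ)+1), mul_nonneg hC0.le hk0,
      mul_nonneg (mul_nonneg hk0 hk0) hC0.le, mul_nonneg hk0 hk0]
  calc ((k:ℝ)+1+1) * (|co m ν k| * (|m|^(2:ℝ)/(((k:ℝ)+1) * ((k:ℝ)+ν+1)))) * (S^k * S)
      = (((k:ℝ)+1+1) * (|m|^(2:ℝ)/(((k:ℝ)+1) * ((k:ℝ)+ν+1))) * S) * (|co m ν k| * S^k) := by ring
    _ ≤ (1/2 * ((k:ℝ)+1)) * (|co m ν k| * S^k) := by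
        apply mul_le_mul_of_nonneg_right key (by positivity)
    _ = 1/2 * (((k:ℝ)+1) * |co m ν k| * S^k) := by ring




lemma co_shift {m ν : ℝ} (hm : m ≠ 0) (hν : ∀ k : ℤ, ν ≠ (k : ℝ)) (k : ℕ) :
    ((k:ℝ)+1) * co m ν (k+1) = |m| * co m (ν+1) k := by
  have hΓ : Real.Gamma ((k:ℝ) + (ν+1) + 1) ≠ 0 := by
    have h : (k:ℝ) + (ν+1) + 1 = ((k:ℝ)+2) + ν := by ring
    rw [h]; exact gamma_ne hν _ ⟨(k:ℤ)+2, by push_cast; ring⟩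
  have hfac : ((k.factorial : ℝ)) ≠ 0 := Nat.cast_ne_zero.2 k.factorial_ne_zero
  have hpow : |m| ^ (2 * (((k:ℕ)+1:ℕ):ℝ) + ν) = |m| * |m| ^ (2*(k:ℝ) + (ν+1)) := by
    have h : 2 * (((k:ℕ)+1:ℕ):ℝ) + ν = 1 + (2*(k:ℝ) + (ν+1)) := by push_cast; ring
    rw [h, Real.rpow_add (abs_pos.2 hm), Real.rpow_one]
  unfold co
  rw [hpow, Nat.factorial_succ]
  have harg : ((((k:ℕ)+1:ℕ)):ℝ) + ν + 1 = (k:ℝ) + (ν+1) + 1 := by push_cast; ring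
  rw [harg]
  push_cast
  field_simp

lemma co_recur {m ν : ℝ} (hm : m ≠ 0) (hν : ∀ k : ℤ, ν ≠ (k : ℝ)) (k : ℕ) :
    ((k:ℝ)+ν) * co m ν k = |m| * co m (ν-1) k := by
  have hne : (k:ℝ) + ν ≠ 0 := by
    have := nonint hν ((k:ℝ)) ⟨(k:ℤ), by push_cast; ring⟩ 0
    push_cast at this; exact this
  have hΓν : Real.Gamma ((k:ℝ) + ν) ≠ 0 := gamma_ne hν _ ⟨(k:ℤ), by push_cast; ring⟩
  have hfac : ((k.factorial : ℝ)) ≠ 0 := Nat.cast_ne_zero.2 k.factorial_ne_zero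
  have hΓ : Real.Gamma ((k:ℝ) + ν + 1) = ((k:ℝ)+ν) * Real.Gamma ((k:ℝ)+ν) := by
    rw [Real.Gamma_add_one hne]
  have hpow : |m| ^ (2 * (k:ℝ) + ν) = |m| * |m| ^ (2*(k:ℝ) + (ν-1)) := by
    have h : 2 * (k:ℝ) + ν = 1 + (2*(k:ℝ) + (ν-1)) := by ring
    rw [h, Real.rpow_add (abs_pos.2 hm), Real.rpow_one]
  unfold co
  rw [hpow, hΓ]
  have harg : (k:ℝ) + (ν-1) + 1 = (k:ℝ) + ν := by ring
  rw [harg]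
  field_simp

lemma summable_norm {m ν : ℝ} (hm : m ≠ 0) (hν : ∀ k : ℤ, ν ≠ (k : ℝ)) (u : ℂ) :
    Summable (fun k : ℕ => ((k:ℂ)+1) * (co m ν k : ℂ) * u ^ k) ∧
    Summable (fun k : ℕ => (co m ν k : ℂ) * u ^ k) ∧
    Summable (fun k : ℕ => (k:ℂ) * (co m ν k : ℂ) * u ^ k) := by
  have hS : (0:ℝ) < ‖u‖ + 1 := by positivity
  have hmain := summable_main hm hν (S := ‖u‖+1) hS
  have hb : ∀ k : ℕ, ‖u‖^k ≤ (‖u‖+1)^k :=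
    fun k => pow_le_pow_left₀ (norm_nonneg u) (by linarith) k
  have key : ∀ (a : ℕ → ℝ), (∀ k, |a k| ≤ (k:ℝ)+1) →
      Summable (fun k : ℕ => (a k : ℂ) * (co m ν k : ℂ) * u ^ k) := by
    intro a ha
    apply Summable.of_norm_bounded hmain
    intro k
    rw [norm_mul, norm_mul, norm_pow, Complex.norm_real, Complex.norm_real,
      Real.norm_eq_abs, Real.norm_eq_abs]
    calc |a k| * |co m ν k| * ‖u‖^k ≤ ((k:ℝ)+1) * |co m ν k| * (‖u‖+1)^k := by
          apply mul_le_mul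
          · exact mul_le_mul_of_nonneg_right (ha k) (abs_nonneg _)
          · exact hb k
          · positivity
          · positivity
      _ = _ := rfl
  refine ⟨?_, ?_, ?_⟩
  · have := key (fun k => (k:ℝ)+1) (fun k => by
      rw [_root_.abs_of_nonneg (by positivity)])
    simpa using this
  · have := key (fun _ => 1) (fun k => by
      simp)
    simpa using this
  · have := key (fun k => (k:ℝ)) (fun k => by
      rw [_root_.abs_of_nonneg (Nat.cast_nonneg k)]; linarith)
    simpa using this

lemma g_hasDerivAt {m ν : ℝ} (hm : m ≠ 0) (hν : ∀ k : ℤ, ν ≠ (k : ℝ)) (u : ℂ) :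
    HasDerivAt (g m ν) (((|m| : ℝ) : ℂ) * g m (ν+1) u) u := by
  set S : ℝ := ‖u‖ + 1 with hSdef
  have hS : (0:ℝ) < S := by positivity
  have hS1 : (1:ℝ) ≤ S := by rw [hSdef]; linarith [norm_nonneg u]
  have hmain := summable_main hm hν (S := S) hS
  have hbound : ∀ (k : ℕ) (y : ℂ), ‖y‖ ≤ S →
      ‖(co m ν k : ℂ) * ((k:ℂ) * y^(k-1))‖ ≤ ((k:ℝ)+1) * |co m ν k| * S^k := by
    intro k y hy'
    rw [norm_mul, norm_mul, Complex.norm_real, Real.norm_eq_abs, Complex.norm_natCast,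
      norm_pow]
    calc |co m ν k| * ((k:ℝ) * ‖y‖^(k-1)) ≤ |co m ν k| * (((k:ℝ)+1) * S^k) := by
          apply mul_le_mul_of_nonneg_left ?_ (abs_nonneg _)
          apply mul_le_mul (by linarith) ?_ (by positivity) (by linarith [Nat.cast_nonneg (α := ℝ) k])
          calc ‖y‖^(k-1) ≤ S^(k-1) := pow_le_pow_left₀ (norm_nonneg y) hy' _
            _ ≤ S^k := pow_le_pow_right₀ hS1 (Nat.sub_le k 1)
      _ = ((k:ℝ)+1) * |co m ν k| * S^k := by ring
  have hsum : Summable (fun k : ℕ => (co m ν k : ℂ) * ((k:ℂ) * u^(k-1))) :=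
    Summable.of_norm_bounded hmain (fun k => hbound k u (by rw [hSdef]; linarith))
  have hder : HasDerivAt (g m ν)
      (∑' k : ℕ, (co m ν k : ℂ) * ((k:ℂ) * u ^ (k-1))) u := by
    apply hasDerivAt_tsum_of_isPreconnected hmain (Metric.isOpen_ball (x := (0:ℂ)) (ε := S))
      (convex_ball (0:ℂ) S).isPreconnected
      (fun k y _ => (hasDerivAt_pow k y).const_mul ((co m ν k : ℂ)))
      ?_ ?_ ((summable_norm hm hν u).2.1) ?_
    · intro k y hy
      exact hbound k y (by rw [Metric.mem_ball, dist_zero_right] at hy; exact hy.le)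
    · rw [Metric.mem_ball, dist_zero_right]; rw [hSdef]; linarith
    · rw [Metric.mem_ball, dist_zero_right]; rw [hSdef]; linarith
  convert hder using 1
  rw [Summable.tsum_eq_zero_add hsum]
  simp only [Nat.cast_zero, zero_mul, mul_zero, zero_add]
  rw [g, ← tsum_mul_left]
  congr 1; funext k
  have hR := co_shift hm hν k
  have hC : ((k:ℂ)+1) * (co m ν (k+1):ℂ) = ((|m|:ℝ):ℂ) * (co m (ν+1) k : ℂ) := by
    exact_mod_cast congrArg (fun x : ℝ => (x:ℂ)) hR
  simp only [Nat.add_sub_cancel]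
  push_cast
  linear_combination -u^k * hC

lemma g_identity {m ν : ℝ} (hm : m ≠ 0) (hν : ∀ k : ℤ, ν ≠ (k : ℝ)) (u : ℂ) :
    (ν:ℂ) * g m ν u + u * (((|m|:ℝ):ℂ) * g m (ν+1) u) = ((|m|:ℝ):ℂ) * g m (ν-1) u := by
  have S1 := (summable_norm hm hν u).2.1
  have S2 := (summable_norm hm hν u).2.2
  have E : u * (((|m|:ℝ):ℂ) * g m (ν+1) u) = ∑' k : ℕ, (k:ℂ) * (co m ν k:ℂ) * u^k := by
    rw [Summable.tsum_eq_zero_add S2]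
    simp only [Nat.cast_zero, zero_mul, zero_add]
    rw [g, ← tsum_mul_left, ← tsum_mul_left]
    congr 1; funext k
    have hR := co_shift hm hν k
    have hC : ((k:ℂ)+1) * (co m ν (k+1):ℂ) = ((|m|:ℝ):ℂ) * (co m (ν+1) k : ℂ) := by
      exact_mod_cast congrArg (fun x : ℝ => (x:ℂ)) hR
    push_cast
    linear_combination -u^(k+1) * hC
  rw [E]
  conv_lhs => rw [g, ← tsum_mul_left]
  rw [← Summable.tsum_add (S1.mul_left _) S2]
  rw [show g m (ν-1) u = ∑' k : ℕ, (co m (ν-1) k : ℂ) * u ^ k from rfl, ← tsum_mul_left]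
  congr 1; funext k
  have hR := co_recur hm hν k
  have hC : ((k:ℂ)+ν) * (co m ν k:ℂ) = ((|m|:ℝ):ℂ) * (co m (ν-1) k : ℂ) := by
    exact_mod_cast congrArg (fun x : ℝ => (x:ℂ)) hR
  push_cast
  linear_combination u^k * hC





lemma W_eq {m : ℝ} (ν : ℝ) (hm : m ≠ 0) {z : ℂ} (hz : z ∈ Complex.slitPlane) :
    Wfun m ν z = z ^ (ν:ℂ) * g m ν (z * (starRingEnd ℂ) z) := by
  have hz0 : z ≠ 0 := slitPlane_ne_zero hz
  have hza : 0 < ‖z‖ := norm_pos_iff.mpr hz0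
  have hb : besselI ν (2 * |m| * ‖z‖)
      = (‖z‖) ^ ν * ∑' k : ℕ, co m ν k * (Complex.normSq z)^k := by
    unfold besselI co
    rw [← tsum_mul_left]
    congr 1; funext k
    have h2 : 2 * |m| * ‖z‖ / 2 = |m| * ‖z‖ := by ring
    rw [h2, Real.mul_rpow (abs_nonneg m) (norm_nonneg z)]
    have e1 : (‖z‖) ^ (2*(k:ℝ)+ν)
        = (‖z‖ ^ 2)^k * ‖z‖ ^ ν := by
      rw [Real.rpow_add hza]
      congr 1
      rw [show (2*(k:ℝ)) = ((2*k:ℕ):ℝ) by push_cast; ring, Real.rpow_natCast, pow_mul]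
    rw [e1, Complex.normSq_eq_norm_sq]
    ring
  have hgq : g m ν (z * (starRingEnd ℂ) z)
      = ((∑' k : ℕ, co m ν k * (Complex.normSq z)^k : ℝ) : ℂ) := by
    rw [g, Complex.mul_conj, Complex.ofReal_tsum]
    congr 1; funext k
    push_cast
    ring
  have hcpow : z ^ (ν:ℂ)
      = Complex.exp (Complex.I * ν * z.arg) * ((‖z‖ ^ ν : ℝ) : ℂ) := by
    rw [Complex.cpow_def_of_ne_zero hz0]
    have hlog : Complex.log z = (Real.log (‖z‖) : ℂ) + z.arg * Complex.I := rfl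
    rw [hlog, add_mul, Complex.exp_add]
    rw [Real.rpow_def_of_pos hza]
    push_cast [Complex.ofReal_exp]
    ring_nf
  rw [Wfun, hb, hgq, hcpow]
  push_cast
  ring




lemma q_hasFDerivAt (z : ℂ) :
    HasFDerivAt (fun w : ℂ => w * (starRingEnd ℂ) w)
      (z • Complex.conjCLE.toContinuousLinearMap
        + (starRingEnd ℂ) z • ContinuousLinearMap.id ℝ ℂ) z := by
  have hc : HasFDerivAt (fun w : ℂ => w) (ContinuousLinearMap.id ℝ ℂ) z := hasFDerivAt_id z
  have hd : HasFDerivAt (fun w : ℂ => (starRingEnd ℂ) w)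
      Complex.conjCLE.toContinuousLinearMap z := by
    exact Complex.conjCLE.toContinuousLinearMap.hasFDerivAt (x := z)
  exact hc.mul hd

lemma W_fderiv {m ν : ℝ} (hm : m ≠ 0) (hν : ∀ k : ℤ, ν ≠ (k : ℝ)) {z : ℂ}
    (hz : z ∈ Complex.slitPlane) (v : ℂ) :
    fderiv ℝ (Wfun m ν) z v
      = (ν:ℂ) * z ^ ((ν:ℂ)-1) * v * g m ν (z * (starRingEnd ℂ) z)
        + z ^ (ν:ℂ) * (((|m|:ℝ):ℂ) * g m (ν+1) (z * (starRingEnd ℂ) z))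
          * (z * (starRingEnd ℂ) v + (starRingEnd ℂ) z * v) := by
  have heq : Set.EqOn (Wfun m ν)
      (fun w : ℂ => w ^ (ν:ℂ) * g m ν (w * (starRingEnd ℂ) w)) Complex.slitPlane :=
    fun w hw => W_eq ν hm hw
  have hfe : fderiv ℝ (Wfun m ν) z
      = fderiv ℝ (fun w : ℂ => w ^ (ν:ℂ) * g m ν (w * (starRingEnd ℂ) w)) z :=
    Filter.EventuallyEq.fderiv_eq
      (Filter.eventuallyEq_of_mem (Complex.isOpen_slitPlane.mem_nhds hz) heq)
  have h1 : HasFDerivAt (fun w : ℂ => w ^ (ν:ℂ))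
      ((ContinuousLinearMap.smulRight (1 : ℂ →L[ℂ] ℂ)
        ((ν:ℂ) * z ^ ((ν:ℂ)-1))).restrictScalars ℝ) z :=
    ((Complex.hasStrictDerivAt_cpow_const hz).hasDerivAt.hasFDerivAt).restrictScalars ℝ
  have hgF : HasFDerivAt (g m ν)
      ((ContinuousLinearMap.smulRight (1 : ℂ →L[ℂ] ℂ)
        (((|m|:ℝ):ℂ) * g m (ν+1) (z * (starRingEnd ℂ) z))).restrictScalars ℝ)
      (z * (starRingEnd ℂ) z) :=
    ((g_hasDerivAt hm hν _).hasFDerivAt).restrictScalars ℝ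
  have hcomp := hgF.comp z (q_hasFDerivAt z)
  have hprod := h1.mul hcomp
  have hprod' : HasFDerivAt (fun w : ℂ => w ^ (ν:ℂ) * g m ν (w * (starRingEnd ℂ) w)) _ z := hprod
  rw [hfe, hprod'.fderiv]
  simp only [ContinuousLinearMap.add_apply, ContinuousLinearMap.smul_apply,
    ContinuousLinearMap.coe_comp', Function.comp_apply,
    ContinuousLinearMap.coe_restrictScalars', ContinuousLinearMap.smulRight_apply,
    ContinuousLinearMap.one_apply, ContinuousLinearMap.id_apply,
    ContinuousLinearEquiv.coe_coe, Complex.conjCLE_apply, smul_eq_mul]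
  ring


lemma W_contDiffOn {m ν : ℝ} (hm : m ≠ 0) (hν : ∀ k : ℤ, ν ≠ (k : ℝ)) :
    ContDiffOn ℝ 1 (Wfun m ν) Complex.slitPlane := by
  have hg_diff : Differentiable ℂ (g m ν) := fun u => (g_hasDerivAt hm hν u).differentiableAt
  have hg_cd : ContDiff ℝ 1 (g m ν) := by
    have h := (analyticOnNhd_univ_iff_differentiable.2 hg_diff).contDiffOn
      (n := 1) uniqueDiffOn_univ
    exact (contDiffOn_univ.1 h).restrict_scalars (𝕜 := ℝ)
  have hconj : ContDiff ℝ 1 (fun w : ℂ => (starRingEnd ℂ) w) := by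
    exact Complex.conjCLE.toContinuousLinearMap.contDiff (n := 1)
  have hq_cd : ContDiff ℝ 1 (fun w : ℂ => w * (starRingEnd ℂ) w) :=
    contDiff_id.mul hconj
  have hpow : ContDiffOn ℝ 1 (fun w : ℂ => w ^ (ν:ℂ)) Complex.slitPlane := by
    have hd : DifferentiableOn ℂ (fun w : ℂ => w ^ (ν:ℂ)) Complex.slitPlane := fun w hw =>
      ((Complex.hasStrictDerivAt_cpow_const hw).hasDerivAt.differentiableAt).differentiableWithinAt
    exact ((hd.analyticOnNhd Complex.isOpen_slitPlane).contDiffOn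
      Complex.isOpen_slitPlane.uniqueDiffOn).restrict_scalars (𝕜 := ℝ)
  have hmain : ContDiffOn ℝ 1
      (fun w : ℂ => w ^ (ν:ℂ) * g m ν (w * (starRingEnd ℂ) w)) Complex.slitPlane :=
    hpow.mul ((hg_cd.comp hq_cd).contDiffOn)
  exact hmain.congr (fun w hw => W_eq ν hm hw)

end Stmt2Aux

open Stmt2Aux in
/-- `∂W_ν = |m|·W_{ν−1}` and `∂̄W_ν = |m|·W_{ν+1}` on the slit plane, where
`∂ = (∂_x − i∂_y)/2` and `∂̄ = (∂_x + i∂_y)/2`; moreover `W_ν` is continuously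
real-differentiable there. -/
theorem stmt2 (m ν : ℝ) (hm : m ≠ 0) (hν : ∀ k : ℤ, ν ≠ (k : ℝ)) :
    ContDiffOn ℝ 1 (Wfun m ν) Complex.slitPlane ∧
    ∀ z ∈ Complex.slitPlane,
      (fderiv ℝ (Wfun m ν) z 1 - Complex.I * fderiv ℝ (Wfun m ν) z Complex.I) / 2 =
        ((|m| : ℝ) : ℂ) * Wfun m (ν - 1) z ∧
      (fderiv ℝ (Wfun m ν) z 1 + Complex.I * fderiv ℝ (Wfun m ν) z Complex.I) / 2 =
        ((|m| : ℝ) : ℂ) * Wfun m (ν + 1) z := by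
  refine ⟨W_contDiffOn hm hν, fun z hz => ?_⟩
  have hz0 : z ≠ 0 := Complex.slitPlane_ne_zero hz
  set u : ℂ := z * (starRingEnd ℂ) z with hu
  have f1 := W_fderiv hm hν hz 1
  have fI := W_fderiv hm hν hz Complex.I
  have gid := g_identity hm hν u
  have hz1 : z ^ (ν:ℂ) = z ^ ((ν:ℂ)-1) * z := by
    conv_lhs => rw [show (ν:ℂ) = ((ν:ℂ)-1)+1 by ring]
    rw [Complex.cpow_add _ _ hz0, Complex.cpow_one]
  have hz2 : z ^ ((ν:ℂ)+1) = z ^ (ν:ℂ) * z := by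
    rw [Complex.cpow_add _ _ hz0, Complex.cpow_one]
  constructor
  · rw [f1, fI, W_eq (ν-1) hm hz]
    push_cast
    simp only [map_one, Complex.conj_I, mul_one, one_mul]
    linear_combination
      (-(((ν:ℂ) * z^((ν:ℂ)-1) * g m ν u)
          + (((|m|:ℝ):ℂ) * g m (ν+1) u) * (z^(ν:ℂ)) * ((starRingEnd ℂ) z - z))/2)
        * Complex.I_mul_I
      + z^((ν:ℂ)-1) * gid
      + ((((|m|:ℝ):ℂ) * g m (ν+1) u) * (starRingEnd ℂ) z) * hz1
  · rw [f1, fI, W_eq (ν+1) hm hz]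
    push_cast
    simp only [map_one, Complex.conj_I, mul_one, one_mul]
    linear_combination
      (((((ν:ℂ) * z^((ν:ℂ)-1) * g m ν u)
          + (((|m|:ℝ):ℂ) * g m (ν+1) u) * (z^(ν:ℂ)) * ((starRingEnd ℂ) z - z))/2))
        * Complex.I_mul_I
      + (-(((|m|:ℝ):ℂ) * g m (ν+1) u)) * hz2
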